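/- arXiv:math/0203054 — 8 statements merged into one kernel-verified Lean document; each statement's English description precedes it below -/
import Mathlib

section
/- In the setting of the weight filtration W_• of a nilpotent infinitesimal isometry N of a nondegenerate (-1)^w-symmetric form S on a finite-dimensional vector space V over a field of characteristic 0: for each l ≥ 0, the rule S_l([a],[b]) := S(ã, N^l b̃), for a, b ∈ Gr^W_{w+l} with representatives ã, b̃ ∈ W_{w+l}, gives a well-defined (independent of the choice of representatives) bilinear form on Gr^W_{w+l}, and S_l is (-1)^{w+l}-symmetric. -/
/-- The forms `S_l([a],[b]) = S(ã, N^l b̃)` on `Gr^W_{w+l}` are well defined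
(independent of the representatives) and `(-1)^{w+l}`-symmetric. -/
theorem graded_forms_well_defined_and_symmetric
    (K V : Type*) [Field K] [CharZero K] [AddCommGroup V] [Module K V]
    [FiniteDimensional K V]
    (N : V →ₗ[K] V) (hN : IsNilpotent N) (w : ℤ)
    (S : V →ₗ[K] V →ₗ[K] K)
    (hSnd : ∀ v : V, (∀ u : V, S v u = 0) → v = 0)
    (hSsym : ∀ a b : V, S b a = (-1 : K) ^ w * S a b)
    (hNinf : ∀ a b : V, S (N a) b + S a (N b) = 0)
    (W : ℤ → Submodule K V)
    (hmono : Monotone W)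
    (hbot : ∃ a : ℤ, ∀ l : ℤ, l ≤ a → W l = ⊥)
    (htop : ∃ b : ℤ, ∀ l : ℤ, b ≤ l → W l = ⊤)
    (hshift : ∀ l : ℤ, Submodule.map N (W l) ≤ W (l - 2))
    (hiso : ∀ l : ℤ, 0 ≤ l →
      (W (w - l) ≤ Submodule.map (N ^ l.toNat) (W (w + l)) ⊔ W (w - l - 1)) ∧
      (∀ x ∈ W (w + l), (N ^ l.toNat) x ∈ W (w - l - 1) → x ∈ W (w + l - 1)))
    (horth : ∀ l l' : ℤ, l + l' < w → ∀ a ∈ W l, ∀ b ∈ W l', S a b = 0) :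
    (∀ l : ℕ, ∀ a a' b b' : V,
      a ∈ W (w + l) → a' ∈ W (w + l) → b ∈ W (w + l) → b' ∈ W (w + l) →
      a - a' ∈ W (w + l - 1) → b - b' ∈ W (w + l - 1) →
      S a ((N ^ l) b) = S a' ((N ^ l) b')) ∧
    (∀ l : ℕ, ∀ a b : V, a ∈ W (w + l) → b ∈ W (w + l) →
      S b ((N ^ l) a) = (-1 : K) ^ (w + l) * S a ((N ^ l) b)) := by
  obtain ⟨A, hA⟩ := hbot
  -- N^k maps W m into W (m - 2k)
  have hone : ∀ (k : ℕ) (m : ℤ) (x : V), x ∈ W m → (N ^ k) x ∈ W (m - 2 * k) := by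
    intro k
    induction k with
    | zero => intro m x hx; simpa using hx
    | succ k ih =>
      intro m x hx
      have h1 : N ((N ^ k) x) ∈ W (m - 2 * k - 2) :=
        hshift (m - 2 * k) ⟨(N ^ k) x, ih m x hx, rfl⟩
      have h2 : (N ^ (k + 1)) x = N ((N ^ k) x) := by
        rw [pow_succ']; rfl
      have h3 : m - 2 * ((k : ℤ) + 1) = m - 2 * k - 2 := by ring
      rw [h2]
      simpa [h3, Nat.cast_succ] using h1
  -- sign transfer
  have hsign : ∀ (k : ℕ) (a b : V), S a ((N ^ k) b) = (-1 : K) ^ k * S ((N ^ k) a) b := by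
    intro k
    induction k with
    | zero => intro a b; simp
    | succ k ih =>
      intro a b
      have h2 : (N ^ (k + 1)) b = N ((N ^ k) b) := by rw [pow_succ']; rfl
      have h3 : (N ^ k) (N a) = (N ^ (k + 1)) a := by rw [pow_succ]; rfl
      have h4 : S a (N ((N ^ k) b)) = - S (N a) ((N ^ k) b) := by
        have h := hNinf a ((N ^ k) b); linear_combination h
      rw [h2, h4, ih (N a) b, h3]
      ring
  -- orthogonality: S(W_a, W_b) = 0 when a + b < 2w and b ≤ w - 1
  have horth2 : ∀ n : ℕ, ∀ b a : ℤ, b ≤ A + n → a + b < 2 * w → b ≤ w - 1 →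
      ∀ x ∈ W a, ∀ y ∈ W b, S x y = 0 := by
    intro n
    induction n using Nat.strong_induction_on with
    | _ n ih =>
      intro b a hbn hab hbw x hx y hy
      by_cases hbA : b ≤ A
      · have : y = 0 := by rw [hA b hbA] at hy; simpa using hy
        simp [this]
      · push_neg at hbA
        set l : ℤ := w - 1 - b with hl
        have hl0 : (0 : ℤ) ≤ l + 1 := by omega
        obtain ⟨h1, -⟩ := hiso (l + 1) hl0
        have hb' : w - (l + 1) = b := by omega
        have hy' : y ∈ Submodule.map (N ^ (l + 1).toNat) (W (w + (l + 1))) ⊔ W (w - (l + 1) - 1) := by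
          apply h1; rw [hb']; exact hy
        rw [Submodule.mem_sup] at hy'
        obtain ⟨u, hu, y', hy'', rfl⟩ := hy'
        obtain ⟨z, hz, rfl⟩ := hu
        have hlt : ((l + 1).toNat : ℤ) = l + 1 := Int.toNat_of_nonneg hl0
        have hterm1 : S x ((N ^ (l + 1).toNat) z) = 0 := by
          rw [hsign]
          have hmem : (N ^ (l + 1).toNat) x ∈ W (a - 2 * (l + 1)) := by
            have := hone (l + 1).toNat a x hx
            rwa [hlt] at this
          have hswap : S ((N ^ (l + 1).toNat) x) z
              = (-1 : K) ^ w * S z ((N ^ (l + 1).toNat) x) := hSsym z ((N ^ (l + 1).toNat) x)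
          have hzero : S z ((N ^ (l + 1).toNat) x) = 0 := by
            refine ih (n - 1) (by omega) (a - 2 * (l + 1)) (w + (l + 1)) (by omega) (by omega)
              (by omega) z hz _ hmem
          rw [hswap, hzero]; ring
        have hterm2 : S x y' = 0 := by
          have hy2 : y' ∈ W (b - 1) := by
            have : w - (l + 1) - 1 = b - 1 := by omega
            rwa [this] at hy''
          exact ih (n - 1) (by omega) (b - 1) a (by omega) (by omega) (by omega) x hx y' hy2
        rw [map_add, hterm1, hterm2, add_zero]
  -- specialized vanishing lemmas
  have key2 : ∀ (l : ℕ) (p q : V), p ∈ W (w + l) → q ∈ W (w + l - 1) → S p ((N ^ l) q) = 0 := by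
    intro l p q hp hq
    have hmem : (N ^ l) q ∈ W (w + l - 1 - 2 * l) := hone l _ q hq
    exact horth2 (w + l - 1 - 2 * l - A).toNat (w + l - 1 - 2 * l) (w + l) (by omega)
      (by omega) (by omega) p hp _ hmem
  have key1 : ∀ (l : ℕ) (p q : V), p ∈ W (w + l - 1) → q ∈ W (w + l) → S p ((N ^ l) q) = 0 := by
    intro l p q hp hq
    rw [hsign]
    have hmem : (N ^ l) p ∈ W (w + l - 1 - 2 * l) := hone l _ p hp
    have hswap : S ((N ^ l) p) q = (-1 : K) ^ w * S q ((N ^ l) p) := hSsym q ((N ^ l) p)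
    have hzero : S q ((N ^ l) p) = 0 :=
      horth2 (w + l - 1 - 2 * l - A).toNat (w + l - 1 - 2 * l) (w + l) (by omega)
        (by omega) (by omega) q hq _ hmem
    rw [hswap, hzero]; ring
  constructor
  · intro l a a' b b' ha ha' hb hb' hda hdb
    have e1 : S (a - a') ((N ^ l) b) = 0 := key1 l (a - a') b hda hb
    have e2 : S a' ((N ^ l) (b - b')) = 0 := key2 l a' (b - b') ha' hdb
    have expand : S a ((N ^ l) b) - S a' ((N ^ l) b')
        = S (a - a') ((N ^ l) b) + S a' ((N ^ l) (b - b')) := by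
      simp only [map_sub, LinearMap.sub_apply]
      ring
    have := expand
    rw [e1, e2] at this
    linear_combination this
  · intro l a b ha hb
    rw [hsign l b a, hSsym a ((N ^ l) b)]
    have : (-1 : K) ^ (w + (l : ℤ)) = (-1 : K) ^ w * (-1 : K) ^ (l : ℕ) := by
      rw [zpow_add₀ (by norm_num : (-1 : K) ≠ 0), zpow_natCast]
    rw [this]
    ring
end

section
/- Let V, N, w, W_• be as in the monodromy weight filtration setting over a field of characteristic 0. Define the primitive subspace P_{w+l} := ker(N^{l+1} : Gr^W_{w+l} → Gr^W_{w-l-2}) for l ≥ 0 and P_{w+l} := 0 for l < 0. Then for every l ∈ ℤ one has the direct sum decomposition Gr^W_{w+l} = ⊕_{i ≥ 0} N^i P_{w+l+2i}. -/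
/-- Primitive decomposition `Gr^W_{w+l} = ⊕_{i ≥ 0} N^i P_{w+l+2i}`, stated in terms of
representatives modulo `W_{w+l-1}`.  Here `Prim m` is the preimage in `W_{w+m}` of the
primitive subspace `P_{w+m} = ker(N^{m+1} : Gr^W_{w+m} → Gr^W_{w-m-2})` for `m ≥ 0`, and `⊥`
for `m < 0`. -/
theorem primitive_decomposition
    (K V : Type*) [Field K] [CharZero K] [AddCommGroup V] [Module K V]
    [FiniteDimensional K V]
    (N : V →ₗ[K] V) (hN : IsNilpotent N) (w : ℤ)
    (W : ℤ → Submodule K V)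
    (hmono : Monotone W)
    (hbot : ∃ a : ℤ, ∀ l : ℤ, l ≤ a → W l = ⊥)
    (htop : ∃ b : ℤ, ∀ l : ℤ, b ≤ l → W l = ⊤)
    (hshift : ∀ l : ℤ, Submodule.map N (W l) ≤ W (l - 2))
    (hiso : ∀ l : ℤ, 0 ≤ l →
      (W (w - l) ≤ Submodule.map (N ^ l.toNat) (W (w + l)) ⊔ W (w - l - 1)) ∧
      (∀ x ∈ W (w + l), (N ^ l.toNat) x ∈ W (w - l - 1) → x ∈ W (w + l - 1)))
    (Prim : ℤ → Submodule K V)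
    (hPrim : ∀ m : ℤ, Prim m =
      if 0 ≤ m then
        W (w + m) ⊓ Submodule.comap (N ^ (m.toNat + 1)) (W (w - m - 3))
      else ⊥) :
    ∀ l : ℤ,
      (W (w + l) ≤
        (⨆ i : ℕ, Submodule.map (N ^ i) (Prim (l + 2 * (i : ℤ)))) ⊔ W (w + l - 1)) ∧
      (∀ (s : Finset ℕ) (x : ℕ → V),
        (∀ i ∈ s, x i ∈ Submodule.map (N ^ i) (Prim (l + 2 * (i : ℤ)))) →
        (∑ i ∈ s, x i) ∈ W (w + l - 1) → ∀ i ∈ s, x i ∈ W (w + l - 1)) := by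
  obtain ⟨b, hb⟩ := htop
  -- pointwise iterated shift
  have hsh : ∀ (k : ℕ) (l : ℤ) (x : V), x ∈ W l → (N ^ k) x ∈ W (l - 2 * k) := by
    intro k
    induction k with
    | zero => intro l x hx; simpa using hx
    | succ k ihk =>
      intro l x hx
      have h2 : N ((N ^ k) x) ∈ W (l - 2 * k - 2) :=
        hshift _ (Submodule.mem_map_of_mem (ihk l x hx))
      have h3 : (N ^ (k + 1)) x = N ((N ^ k) x) := by
        rw [pow_succ', Module.End.mul_apply]
      rw [h3]
      exact hmono (by push_cast; omega) h2
  have hPrimW : ∀ m : ℤ, Prim m ≤ W (w + m) := by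
    intro m; rw [hPrim m]; split_ifs; exacts [inf_le_left, bot_le]
  have hPrimKer : ∀ m : ℤ, 0 ≤ m → ∀ p ∈ Prim m,
      (N ^ (m.toNat + 1)) p ∈ W (w - m - 3) := by
    intro m hm p hp
    rw [hPrim m, if_pos hm] at hp
    exact Submodule.mem_comap.mp hp.2
  have hPrimHigh : ∀ (m : ℤ) (i : ℕ), m + 1 ≤ i → ∀ p ∈ Prim m,
      (N ^ i) p ∈ W (w + m - 2 * i - 1) := by
    intro m i him p hp
    rcases le_or_gt 0 m with hm | hm
    · have hkey := hPrimKer m hm p hp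
      have hi : i = (i - (m.toNat + 1)) + (m.toNat + 1) := by omega
      have heq : (N ^ i) p = (N ^ (i - (m.toNat + 1))) ((N ^ (m.toNat + 1)) p) := by
        rw [← Module.End.mul_apply, ← pow_add, ← hi]
      rw [heq]
      exact hmono (by omega) (hsh _ _ _ hkey)
    · rw [hPrim m, if_neg (by omega)] at hp
      simp only [Submodule.mem_bot] at hp
      rw [hp, map_zero]
      exact zero_mem _
  have key : ∀ n : ℕ, ∀ l : ℤ, b - w - l + 1 ≤ (n : ℤ) →
      (W (w + l) ≤
        (⨆ i : ℕ, Submodule.map (N ^ i) (Prim (l + 2 * (i : ℤ)))) ⊔ W (w + l - 1)) ∧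
      (∀ (s : Finset ℕ) (x : ℕ → V),
        (∀ i ∈ s, x i ∈ Submodule.map (N ^ i) (Prim (l + 2 * (i : ℤ)))) →
        (∑ i ∈ s, x i) ∈ W (w + l - 1) → ∀ i ∈ s, x i ∈ W (w + l - 1)) := by
    intro n
    induction n with
    | zero =>
      intro l hl
      have htop' : W (w + l - 1) = ⊤ := hb _ (by omega)
      constructor
      · rw [htop']; exact le_top.trans le_sup_right
      · intro s x _ _ i _; rw [htop']; exact Submodule.mem_top
    | succ n ih =>
      intro l hl
      constructor
      -- PART 1 : spanning
      · rcases le_or_gt 0 l with hl0 | hl0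
        · -- case l ≥ 0
          intro x hx
          have hIH := (ih (l + 2) (by omega)).1
          have hx2 : (N ^ (l.toNat + 1)) x ∈ W (w - (l + 2)) :=
            hmono (by omega) (hsh (l.toNat + 1) (w + l) x hx)
          have h2 : (l + 2).toNat = l.toNat + 2 := by omega
          have hsur := (hiso (l + 2) (by omega)).1
          rw [h2] at hsur
          rcases Submodule.mem_sup.mp (hsur hx2) with ⟨u, hu, v, hv, huv⟩
          obtain ⟨z, hz, rfl⟩ := hu
          have hNz : N z ∈ W (w + l) :=
            hmono (by omega) (hshift _ (Submodule.mem_map_of_mem hz))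
          have hp2 : (N ^ (l.toNat + 1)) (x - N z) ∈ W (w - l - 3) := by
            have hcomp : (N ^ (l.toNat + 1)) (N z) = (N ^ (l.toNat + 2)) z := by
              rw [← Module.End.mul_apply, ← pow_succ]
            have : (N ^ (l.toNat + 1)) (x - N z) = v := by
              rw [map_sub, hcomp, ← huv]; abel
            rw [this]
            exact hmono (by omega) hv
          have hpPrim : x - N z ∈ Prim l := by
            rw [hPrim l, if_pos hl0]
            exact ⟨sub_mem hx hNz, Submodule.mem_comap.mpr hp2⟩
          have hpSup : x - N z ∈ ⨆ i : ℕ, Submodule.map (N ^ i) (Prim (l + 2 * (i : ℤ))) := by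
            apply Submodule.mem_iSup_of_mem 0
            exact ⟨x - N z, by simpa using hpPrim, by simp⟩
          rcases Submodule.mem_sup.mp (hIH hz) with ⟨u', hu', v', hv', huv'⟩
          have hNv' : N v' ∈ W (w + l - 1) :=
            hmono (by omega) (hshift _ (Submodule.mem_map_of_mem hv'))
          have hNu' : N u' ∈ ⨆ i : ℕ, Submodule.map (N ^ i) (Prim (l + 2 * (i : ℤ))) := by
            have hle : Submodule.map N
                (⨆ i : ℕ, Submodule.map (N ^ i) (Prim (l + 2 + 2 * (i : ℤ)))) ≤
                ⨆ i : ℕ, Submodule.map (N ^ i) (Prim (l + 2 * (i : ℤ))) := by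
              rw [Submodule.map_iSup]
              apply iSup_le
              intro i
              have e1 : Submodule.map N (Submodule.map (N ^ i) (Prim (l + 2 + 2 * (i : ℤ))))
                  = Submodule.map (N ^ (i + 1)) (Prim (l + 2 + 2 * (i : ℤ))) := by
                rw [← Submodule.map_comp, ← Module.End.mul_eq_comp, ← pow_succ']
              have e2 : l + 2 + 2 * (i : ℤ) = l + 2 * ((i + 1 : ℕ) : ℤ) := by
                push_cast; ring
              rw [e1, e2]
              exact le_iSup (fun j : ℕ => Submodule.map (N ^ j) (Prim (l + 2 * (j : ℤ)))) (i + 1)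
            exact hle (Submodule.mem_map_of_mem hu')
          apply Submodule.mem_sup.mpr
          refine ⟨(x - N z) + N u', add_mem hpSup hNu', N v', hNv', ?_⟩
          have hz2 : N z = N u' + N v' := by rw [← huv', map_add]
          rw [hz2]; abel
        · -- case l < 0
          intro x hx
          have hIH := (ih (-l) (by omega)).1
          have hx' : x ∈ W (w - (-l)) := hmono (by omega) hx
          rcases Submodule.mem_sup.mp ((hiso (-l) (by omega)).1 hx') with ⟨u, hu, v, hv, huv⟩
          obtain ⟨z, hz, rfl⟩ := hu
          rcases Submodule.mem_sup.mp (hIH hz) with ⟨u', hu', v', hv', huv'⟩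
          have hmv : (N ^ (-l).toNat) v' ∈ W (w + l - 1) :=
            hmono (by omega) (hsh _ _ _ hv')
          have hvW : v ∈ W (w + l - 1) := hmono (by omega) hv
          have hmu : (N ^ (-l).toNat) u' ∈
              ⨆ i : ℕ, Submodule.map (N ^ i) (Prim (l + 2 * (i : ℤ))) := by
            have hle : Submodule.map (N ^ (-l).toNat)
                (⨆ i : ℕ, Submodule.map (N ^ i) (Prim (-l + 2 * (i : ℤ)))) ≤
                ⨆ i : ℕ, Submodule.map (N ^ i) (Prim (l + 2 * (i : ℤ))) := by
              rw [Submodule.map_iSup]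
              apply iSup_le
              intro i
              have e1 : Submodule.map (N ^ (-l).toNat)
                    (Submodule.map (N ^ i) (Prim (-l + 2 * (i : ℤ))))
                  = Submodule.map (N ^ ((-l).toNat + i)) (Prim (-l + 2 * (i : ℤ))) := by
                rw [← Submodule.map_comp, ← Module.End.mul_eq_comp, ← pow_add]
              have e2 : -l + 2 * (i : ℤ) = l + 2 * (((-l).toNat + i : ℕ) : ℤ) := by
                push_cast [Int.toNat_of_nonneg (by omega : (0:ℤ) ≤ -l)]; ring
              rw [e1, e2]
              exact le_iSup
                (fun j : ℕ => Submodule.map (N ^ j) (Prim (l + 2 * (j : ℤ)))) ((-l).toNat + i)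
            exact hle (Submodule.mem_map_of_mem hu')
          apply Submodule.mem_sup.mpr
          refine ⟨(N ^ (-l).toNat) u', hmu, (N ^ (-l).toNat) v' + v,
            add_mem hmv hvW, ?_⟩
          have hz2 : (N ^ (-l).toNat) z = (N ^ (-l).toNat) u' + (N ^ (-l).toNat) v' := by
            rw [← huv', map_add]
          rw [← huv, hz2]; abel
      -- PART 2 : independence
      · intro s x hx hsum
        have hex : ∀ i : ℕ, ∃ p : V, i ∈ s →
            p ∈ Prim (l + 2 * (i : ℤ)) ∧ (N ^ i) p = x i := by
          intro i
          by_cases h : i ∈ s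
          · obtain ⟨p, hp, he⟩ := hx i h
            exact ⟨p, fun _ => ⟨hp, he⟩⟩
          · exact ⟨0, fun h' => absurd h' h⟩
        choose p hp using hex
        rcases le_or_gt 0 l with hl0 | hl0
        · -- case l ≥ 0
          set t := s.erase 0 with ht
          set z := ∑ i ∈ t, (N ^ (i - 1)) (p i) with hzdef
          have hz_mem : z ∈ W (w + (l + 2)) := by
            apply Submodule.sum_mem
            intro i hi
            have hi1 : i ∈ s := Finset.mem_of_mem_erase hi
            have hi0 : i ≠ 0 := Finset.ne_of_mem_erase hi
            exact hmono (by omega) (hsh (i - 1) _ _ (hPrimW _ ((hp i hi1).1)))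
          have hNz : N z = ∑ i ∈ t, x i := by
            rw [hzdef, map_sum]
            apply Finset.sum_congr rfl
            intro i hi
            have hi1 : i ∈ s := Finset.mem_of_mem_erase hi
            have hi0 : i ≠ 0 := Finset.ne_of_mem_erase hi
            have : N ((N ^ (i - 1)) (p i)) = (N ^ (i - 1 + 1)) (p i) := by
              rw [pow_succ', Module.End.mul_apply]
            rw [this, show i - 1 + 1 = i by omega]
            exact (hp i hi1).2
          have hsplit : ∑ i ∈ s, x i = (if 0 ∈ s then x 0 else 0) + N z := by
            by_cases h : 0 ∈ s
            · rw [if_pos h, hNz, Finset.add_sum_erase _ _ h]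
            · rw [if_neg h, hNz, ht, Finset.erase_eq_of_notMem h, zero_add]
          have hx0ker : (N ^ (l.toNat + 1)) (if 0 ∈ s then x 0 else 0) ∈ W (w - l - 3) := by
            by_cases h : 0 ∈ s
            · rw [if_pos h]
              have h1 := (hp 0 h).1
              have h2 := (hp 0 h).2
              simp only [Nat.cast_zero, mul_zero, add_zero, pow_zero,
                Module.End.one_apply] at h1 h2
              rw [← h2]
              exact hPrimKer l hl0 _ h1
            · rw [if_neg h, map_zero]; exact zero_mem _
          have hNzz : (N ^ ((l + 2).toNat)) z ∈ W (w - (l + 2) - 1) := by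
            have h2 : (l + 2).toNat = l.toNat + 2 := by omega
            have hcomp : (N ^ (l.toNat + 2)) z = (N ^ (l.toNat + 1)) (N z) := by
              rw [← Module.End.mul_apply, ← pow_succ]
            have hNz' : N z = (∑ i ∈ s, x i) - (if 0 ∈ s then x 0 else 0) := by
              rw [hsplit]; abel
            rw [h2, hcomp, hNz', map_sub]
            have hs3 : (N ^ (l.toNat + 1)) (∑ i ∈ s, x i) ∈ W (w - l - 3) :=
              hmono (by omega) (hsh _ _ _ hsum)
            exact hmono (by omega) (sub_mem hs3 hx0ker)
          have hzW : z ∈ W (w + (l + 2) - 1) :=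
            (hiso (l + 2) (by omega)).2 z hz_mem hNzz
          -- apply induction hypothesis (independence) at l + 2
          have hIH := (ih (l + 2) (by omega)).2
          set t' := t.image (· - 1) with ht'
          set y : ℕ → V := fun j => (N ^ j) (p (j + 1)) with hy
          have hinj : ∀ i ∈ t, ∀ j ∈ t, i - 1 = j - 1 → i = j := by
            intro i hi j hj hij
            have : i ≠ 0 := Finset.ne_of_mem_erase hi
            have : j ≠ 0 := Finset.ne_of_mem_erase hj
            omega
          have hsum_t' : ∑ j ∈ t', y j = z := by
            rw [ht', Finset.sum_image hinj, hzdef]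
            apply Finset.sum_congr rfl
            intro i hi
            have hi0 : i ≠ 0 := Finset.ne_of_mem_erase hi
            rw [hy]
            simp only
            rw [show i - 1 + 1 = i by omega]
          have hy_mem : ∀ j ∈ t', y j ∈
              Submodule.map (N ^ j) (Prim ((l + 2) + 2 * (j : ℤ))) := by
            intro j hj
            rcases Finset.mem_image.mp hj with ⟨i, hi, rfl⟩
            have hi1 : i ∈ s := Finset.mem_of_mem_erase hi
            have hi0 : i ≠ 0 := Finset.ne_of_mem_erase hi
            refine ⟨p (i - 1 + 1), ?_, rfl⟩
            rw [show i - 1 + 1 = i by omega,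
              show (l + 2) + 2 * ((i - 1 : ℕ) : ℤ) = l + 2 * (i : ℤ) by omega]
            exact (hp i hi1).1
          have hconc := hIH t' y hy_mem (by rw [hsum_t']; exact hzW)
          intro i hi
          by_cases hi0 : i = 0
          · subst hi0
            have hNz2 : N z ∈ W (w + l - 1) :=
              hmono (by omega) (hshift _ (Submodule.mem_map_of_mem hzW))
            have : x 0 = (∑ j ∈ s, x j) - N z := by
              rw [hsplit, if_pos hi]; abel
            rw [this]
            exact sub_mem hsum hNz2
          · have hit : i ∈ t := Finset.mem_erase.mpr ⟨hi0, hi⟩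
            have hjt' : i - 1 ∈ t' := Finset.mem_image.mpr ⟨i, hit, rfl⟩
            have hyW := hconc (i - 1) hjt'
            have hxi : x i = N (y (i - 1)) := by
              rw [hy]
              simp only
              rw [show i - 1 + 1 = i by omega]
              have : N ((N ^ (i - 1)) (p i)) = (N ^ (i - 1 + 1)) (p i) := by
                rw [pow_succ', Module.End.mul_apply]
              rw [this, show i - 1 + 1 = i by omega]
              exact ((hp i hi).2).symm
            rw [hxi]
            exact hmono (by omega) (hshift _ (Submodule.mem_map_of_mem hyW))
        · -- case l < 0
          set m := (-l).toNat with hm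
          have hmt : (m : ℤ) = -l := Int.toNat_of_nonneg (by omega)
          have hsmall : ∀ i ∈ s, i < m → x i ∈ W (w + l - 1) := by
            intro i hi him
            have := hPrimHigh (l + 2 * (i : ℤ)) i (by omega) (p i) ((hp i hi).1)
            rw [(hp i hi).2] at this
            exact hmono (by omega) this
          set s₂ := s.filter (fun i => m ≤ i) with hs₂
          have hsum₂ : ∑ i ∈ s₂, x i ∈ W (w + l - 1) := by
            have hstot := Finset.sum_filter_add_sum_filter_not s (fun i => m ≤ i) x
            have hrest : ∑ i ∈ s.filter (fun i => ¬ m ≤ i), x i ∈ W (w + l - 1) := by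
              apply Submodule.sum_mem
              intro i hi
              rcases Finset.mem_filter.mp hi with ⟨hi1, hi2⟩
              exact hsmall i hi1 (by omega)
            have : ∑ i ∈ s₂, x i = (∑ i ∈ s, x i) -
                ∑ i ∈ s.filter (fun i => ¬ m ≤ i), x i := by
              rw [← hstot]; abel
            rw [this]
            exact sub_mem hsum hrest
          set z := ∑ i ∈ s₂, (N ^ (i - m)) (p i) with hzdef
          have hz_mem : z ∈ W (w + (-l)) := by
            apply Submodule.sum_mem
            intro i hi
            rcases Finset.mem_filter.mp hi with ⟨hi1, hi2⟩
            exact hmono (by omega) (hsh (i - m) _ _ (hPrimW _ ((hp i hi1).1)))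
          have hNmz : (N ^ m) z = ∑ i ∈ s₂, x i := by
            rw [hzdef, map_sum]
            apply Finset.sum_congr rfl
            intro i hi
            rcases Finset.mem_filter.mp hi with ⟨hi1, hi2⟩
            have : (N ^ m) ((N ^ (i - m)) (p i)) = (N ^ (m + (i - m))) (p i) := by
              rw [← Module.End.mul_apply, ← pow_add]
            rw [this, show m + (i - m) = i by omega]
            exact (hp i hi1).2
          have hzW : z ∈ W (w + (-l) - 1) := by
            apply (hiso (-l) (by omega)).2 z hz_mem
            rw [← hm, hNmz]
            exact hmono (by omega) hsum₂
          have hIH := (ih (-l) (by omega)).2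
          set t' := s₂.image (· - m) with ht'
          set y : ℕ → V := fun j => (N ^ j) (p (j + m)) with hy
          have hinj : ∀ i ∈ s₂, ∀ j ∈ s₂, i - m = j - m → i = j := by
            intro i hi j hj hij
            rcases Finset.mem_filter.mp hi with ⟨_, hi2⟩
            rcases Finset.mem_filter.mp hj with ⟨_, hj2⟩
            omega
          have hsum_t' : ∑ j ∈ t', y j = z := by
            rw [ht', Finset.sum_image hinj, hzdef]
            apply Finset.sum_congr rfl
            intro i hi
            rcases Finset.mem_filter.mp hi with ⟨_, hi2⟩
            rw [hy]
            simp only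
            rw [show i - m + m = i by omega]
          have hy_mem : ∀ j ∈ t', y j ∈
              Submodule.map (N ^ j) (Prim (-l + 2 * (j : ℤ))) := by
            intro j hj
            rcases Finset.mem_image.mp hj with ⟨i, hi, rfl⟩
            rcases Finset.mem_filter.mp hi with ⟨hi1, hi2⟩
            refine ⟨p (i - m + m), ?_, rfl⟩
            rw [show i - m + m = i by omega,
              show -l + 2 * ((i - m : ℕ) : ℤ) = l + 2 * (i : ℤ) by omega]
            exact (hp i hi1).1
          have hconc := hIH t' y hy_mem (by rw [hsum_t']; exact hzW)
          intro i hi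
          by_cases him : m ≤ i
          · have his₂ : i ∈ s₂ := Finset.mem_filter.mpr ⟨hi, him⟩
            have hjt' : i - m ∈ t' := Finset.mem_image.mpr ⟨i, his₂, rfl⟩
            have hyW := hconc (i - m) hjt'
            have hxi : x i = (N ^ m) (y (i - m)) := by
              rw [hy]
              simp only
              rw [show i - m + m = i by omega]
              have : (N ^ m) ((N ^ (i - m)) (p i)) = (N ^ (m + (i - m))) (p i) := by
                rw [← Module.End.mul_apply, ← pow_add]
              rw [this, show m + (i - m) = i by omega]
              exact ((hp i hi).2).symm
            rw [hxi]
            exact hmono (by omega) (hsh m _ _ hyW)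
          · exact hsmall i hi (by omega)
  intro l
  exact key (b - w - l + 1).toNat l (Int.self_le_toNat _)
end

section
/- Let H be a finite-dimensional complex vector space, M an automorphism of H such that M − id is invertible, w an integer, and L a bilinear form on H satisfying L(Ma, Mb) = L(a,b) and L(a,b) = (-1)^w L(Mb, a) for all a, b ∈ H. Define S(a,b) := L(a, (M − id)^{-1} b). Then S(b,a) = (-1)^{w-1} S(a,b) for all a, b ∈ H. -/
/-- Symmetry of the polarizing form `S(a,b) = L(a, (M - id)⁻¹ b)`:
`S(b,a) = (-1)^{w-1} S(a,b)`. -/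
theorem polarizing_form_symmetry_neq_one
    (H : Type*) [AddCommGroup H] [Module ℂ H] [FiniteDimensional ℂ H]
    (M : H →ₗ[ℂ] H) (hM : Function.Bijective M) (w : ℤ)
    (T : H →ₗ[ℂ] H)
    (hT1 : (M - LinearMap.id) ∘ₗ T = LinearMap.id)
    (hT2 : T ∘ₗ (M - LinearMap.id) = LinearMap.id)
    (L : H →ₗ[ℂ] H →ₗ[ℂ] ℂ)
    (hLinv : ∀ a b : H, L (M a) (M b) = L a b)
    (hLtw : ∀ a b : H, L a b = (-1 : ℂ) ^ w * L (M b) a) :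
    ∀ a b : H, L b (T a) = (-1 : ℂ) ^ (w - 1) * L a (T b) := by
  have hMT : ∀ x : H, M (T x) = x + T x := by
    intro x
    have h := congrArg (fun f : H →ₗ[ℂ] H => f x) hT1
    simp only [LinearMap.comp_apply, LinearMap.sub_apply, LinearMap.id_apply] at h
    linear_combination (norm := module) h
  have key : ∀ a b : H, L (T a) b = - L a b - L a (T b) := by
    intro a b
    have h := hLinv (T a) (T b)
    rw [hMT a, hMT b] at h
    simp only [map_add, LinearMap.add_apply] at h
    linear_combination h
  intro a b
  have htw := hLtw b (T a)
  rw [hMT a] at htw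
  simp only [map_add, LinearMap.add_apply] at htw
  rw [key a b] at htw
  have hpow : ((-1 : ℂ) ^ (w - 1)) = (-1 : ℂ) ^ w * (-1) := by
    rw [zpow_sub₀ (by norm_num : (-1 : ℂ) ≠ 0)]
    ring
  rw [htw, hpow]
  ring
end

section
/- Let H be a finite-dimensional complex vector space, N a nilpotent endomorphism, M := e^N, w an integer, and L a bilinear form with L(Ma, Mb) = L(a,b), L(Na, b) = -L(a, Nb), and L(a,b) = (-1)^w L(Mb, a) for all a,b. Let g(N) denote the inverse of the endomorphism -(Σ_{k≥1} N^{k-1}/k!) (which is invertible since Σ_{k≥1} N^{k-1}/k! = id + nilpotent), i.e. g(N) = "-N/(e^N − id)". Define S(a,b) := L(a, g(N) b). Then S(b,a) = (-1)^w S(a,b) for all a, b ∈ H. -/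
open Finset Polynomial

/-- Iterated infinitesimal-isometry relation. -/
lemma pfs_adj_pow {H : Type*} [AddCommGroup H] [Module ℂ H]
    (N : H →ₗ[ℂ] H) (L : H →ₗ[ℂ] H →ₗ[ℂ] ℂ)
    (hLN : ∀ a b : H, L (N a) b = - L a (N b)) :
    ∀ (k : ℕ) (x y : H), L ((N ^ k) x) y = (-1 : ℂ) ^ k * L x ((N ^ k) y) := by
  intro k
  induction k with
  | zero => intro x y; simp
  | succ k ih =>
      intro x y
      have h1 : (N ^ (k+1)) x = (N ^ k) (N x) := by rw [pow_succ]; rfl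
      have h2 : N ((N ^ k) y) = (N ^ (k+1)) y := by rw [pow_succ']; rfl
      rw [h1, ih (N x) y, hLN, ← h2]
      ring

/-- Adjoint of a polynomial in `N` with respect to `L`. -/
lemma pfs_adj_sum {H : Type*} [AddCommGroup H] [Module ℂ H]
    (N : H →ₗ[ℂ] H) (L : H →ₗ[ℂ] H →ₗ[ℂ] ℂ)
    (hLN : ∀ a b : H, L (N a) b = - L a (N b)) (m : ℕ) (c : ℕ → ℂ) (x y : H) :
    L ((∑ k ∈ range m, c k • N ^ k) x) y
      = L x ((∑ k ∈ range m, ((-1 : ℂ) ^ k * c k) • N ^ k) y) := by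
  simp only [LinearMap.sum_apply, LinearMap.smul_apply, map_sum, map_smul, smul_eq_mul]
  refine Finset.sum_congr rfl fun k _ => ?_
  rw [pfs_adj_pow N L hLN k x y]
  ring

/-- Multiplication of truncated power series in a nilpotent endomorphism. -/
lemma pfs_trunc_mul {H : Type*} [AddCommGroup H] [Module ℂ H]
    (N : H →ₗ[ℂ] H) (n : ℕ) (hN : N ^ n = 0) (a b c : ℕ → ℂ)
    (h : ∀ k, k ≤ n → ∑ i ∈ range (k + 1), a i * b (k - i) = c k) :
    (∑ i ∈ range (n + 1), a i • N ^ i) ∘ₗ (∑ j ∈ range (n + 1), b j • N ^ j)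
      = ∑ k ∈ range (n + 1), c k • N ^ k := by
  have hNs : N ^ (n + 1) = 0 := by rw [pow_succ, hN, zero_mul]
  set p : ℂ[X] := ∑ i ∈ range (n + 1), a i • X ^ i with hp
  set q : ℂ[X] := ∑ j ∈ range (n + 1), b j • X ^ j with hq
  set r : ℂ[X] := ∑ k ∈ range (n + 1), c k • X ^ k with hr
  have coeff_sum : ∀ (u : ℕ → ℂ) (d : ℕ), d ≤ n →
      (∑ i ∈ range (n + 1), u i • (X : ℂ[X]) ^ i).coeff d = u d := by
    intro u d hd
    rw [finset_sum_coeff]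
    simp only [coeff_smul, coeff_X_pow, smul_eq_mul]
    rw [Finset.sum_eq_single d]
    · simp
    · intro i _ hne; simp [Ne.symm hne]
    · intro hdn; exact absurd (Finset.mem_range.mpr (Nat.lt_succ_of_le hd)) hdn
  have hdvd : X ^ (n + 1) ∣ p * q - r := by
    rw [X_pow_dvd_iff]
    intro d hd
    have hdn : d ≤ n := Nat.lt_succ_iff.mp hd
    rw [coeff_sub, coeff_mul, Finset.Nat.sum_antidiagonal_eq_sum_range_succ_mk]
    have hcongr : ∀ i ∈ range (d + 1), p.coeff i * q.coeff (d - i) = a i * b (d - i) := by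
      intro i hi
      have hi' : i ≤ d := Nat.lt_succ_iff.mp (Finset.mem_range.mp hi)
      rw [hp, hq, coeff_sum a i (le_trans hi' hdn),
        coeff_sum b (d - i) (le_trans (Nat.sub_le _ _) hdn)]
    rw [Finset.sum_congr rfl hcongr, h d hdn, hr, coeff_sum c d hdn, sub_self]
  obtain ⟨s, hs⟩ := hdvd
  have haeval : ∀ (u : ℕ → ℂ),
      aeval N (∑ i ∈ range (n + 1), u i • (X : ℂ[X]) ^ i)
        = ∑ i ∈ range (n + 1), u i • N ^ i := by
    intro u
    simp [map_sum, map_smul, map_pow]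
  have hmul : (∑ i ∈ range (n + 1), a i • N ^ i) * (∑ j ∈ range (n + 1), b j • N ^ j)
      = ∑ k ∈ range (n + 1), c k • N ^ k := by
    calc (∑ i ∈ range (n + 1), a i • N ^ i) * (∑ j ∈ range (n + 1), b j • N ^ j)
        = aeval N p * aeval N q := by rw [hp, hq, haeval a, haeval b]
      _ = aeval N (p * q) := (map_mul _ _ _).symm
      _ = aeval N (r + X ^ (n + 1) * s) := by
            rw [show r + X ^ (n + 1) * s = p * q by rw [← hs]; ring]
      _ = aeval N r + N ^ (n + 1) * aeval N s := by
            rw [map_add, map_mul, map_pow, aeval_X]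
      _ = ∑ k ∈ range (n + 1), c k • N ^ k := by
            rw [hNs, zero_mul, add_zero, hr, haeval c]
  rw [← Module.End.mul_eq_comp, hmul]

/-- The convolution coefficient identity `e^{-x} · (e^x-1)/x = (1-e^{-x})/x`. -/
lemma pfs_coeff_id (k : ℕ) :
    ∑ i ∈ range (k + 1),
        ((-1 : ℂ) ^ i * (i.factorial : ℂ)⁻¹) * (((k - i) + 1).factorial : ℂ)⁻¹
      = (-1 : ℂ) ^ k * ((k + 1).factorial : ℂ)⁻¹ := by
  have h0 : (∑ i ∈ range (k + 1), (-1 : ℤ) ^ i * ((k + 1).choose i : ℤ)) = (-1 : ℤ) ^ k := by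
    have h := Int.alternating_sum_range_choose_of_ne (n := k + 1) (by omega)
    rw [Finset.sum_range_succ] at h
    simp only [Nat.choose_self, Nat.cast_one, mul_one] at h
    linear_combination h
  have hsum : (∑ i ∈ range (k + 1), (-1 : ℂ) ^ i * ((k + 1).choose i : ℂ)) = (-1 : ℂ) ^ k := by
    have := congrArg (fun z : ℤ => (z : ℂ)) h0
    push_cast at this
    exact this
  have hterm : ∀ i ∈ range (k + 1),
      ((-1 : ℂ) ^ i * (i.factorial : ℂ)⁻¹) * (((k - i) + 1).factorial : ℂ)⁻¹
        = ((-1 : ℂ) ^ i * ((k + 1).choose i : ℂ)) * ((k + 1).factorial : ℂ)⁻¹ := by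
    intro i hi
    have hik : i ≤ k := Nat.lt_succ_iff.mp (Finset.mem_range.mp hi)
    have hsub : k - i + 1 = k + 1 - i := by omega
    have hfac : ((k + 1).choose i) * i.factorial * ((k + 1 - i).factorial)
        = (k + 1).factorial := Nat.choose_mul_factorial_mul_factorial (by omega)
    have hfacC : (((k + 1).choose i : ℂ)) * (i.factorial : ℂ) * (((k + 1 - i).factorial : ℂ))
        = ((k + 1).factorial : ℂ) := by exact_mod_cast congrArg (Nat.cast (R := ℂ)) hfac
    have h1 : (i.factorial : ℂ) ≠ 0 := Nat.cast_ne_zero.mpr (Nat.factorial_ne_zero i)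
    have h2 : (((k + 1 - i).factorial : ℕ) : ℂ) ≠ 0 :=
      Nat.cast_ne_zero.mpr (Nat.factorial_ne_zero _)
    have h3 : (((k + 1).factorial : ℕ) : ℂ) ≠ 0 :=
      Nat.cast_ne_zero.mpr (Nat.factorial_ne_zero _)
    have hinv : (i.factorial : ℂ)⁻¹ * (((k + 1 - i).factorial : ℕ) : ℂ)⁻¹
        = ((k + 1).choose i : ℂ) * (((k + 1).factorial : ℕ) : ℂ)⁻¹ := by
      field_simp
      linear_combination -hfacC
    rw [hsub, mul_assoc, hinv]
    ring
  rw [Finset.sum_congr rfl hterm, ← Finset.sum_mul, hsum]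

/-- Symmetry of the polarizing form `S(a,b) = L(a, g(N) b)` with
`g(N) = "-N/(e^N - id)"` the inverse of `-(Σ_{k ≥ 1} N^{k-1}/k!)`:
`S(b,a) = (-1)^w S(a,b)`. -/
theorem polarizing_form_symmetry_one
    (H : Type*) [AddCommGroup H] [Module ℂ H] [FiniteDimensional ℂ H]
    (N : H →ₗ[ℂ] H) (n : ℕ) (hNnil : N ^ n = 0) (w : ℤ)
    (M : H →ₗ[ℂ] H)
    (hM : M = ∑ k ∈ Finset.range (n + 1), (k.factorial : ℂ)⁻¹ • N ^ k)
    (E : H →ₗ[ℂ] H)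
    (hE : E = ∑ k ∈ Finset.range (n + 1), ((k + 1).factorial : ℂ)⁻¹ • N ^ k)
    (g : H →ₗ[ℂ] H)
    (hg1 : g ∘ₗ (-E) = LinearMap.id) (hg2 : (-E) ∘ₗ g = LinearMap.id)
    (L : H →ₗ[ℂ] H →ₗ[ℂ] ℂ)
    (hLinv : ∀ a b : H, L (M a) (M b) = L a b)
    (hLN : ∀ a b : H, L (N a) b = - L a (N b))
    (hLtw : ∀ a b : H, L a b = (-1 : ℂ) ^ w * L (M b) a) :
    ∀ a b : H, L b (g a) = (-1 : ℂ) ^ w * L a (g b) := by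
  -- the "adjoint" series of M and of E
  set M' : H →ₗ[ℂ] H :=
    ∑ k ∈ Finset.range (n + 1), ((-1 : ℂ) ^ k * (k.factorial : ℂ)⁻¹) • N ^ k with hM'
  set E' : H →ₗ[ℂ] H :=
    ∑ k ∈ Finset.range (n + 1), ((-1 : ℂ) ^ k * ((k + 1).factorial : ℂ)⁻¹) • N ^ k with hE'
  -- operator identity  M' ∘ E = E'
  have hME : M' ∘ₗ E = E' := by
    rw [hM', hE, hE']
    exact pfs_trunc_mul N n hNnil _ _ _ (fun k _ => by
      simpa using pfs_coeff_id k)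
  -- key symmetry for the E form
  have key : ∀ x y : H, L (E y) x = (-1 : ℂ) ^ w * L (E x) y := by
    intro x y
    have h1 : L (E y) x = (-1 : ℂ) ^ w * L (M x) (E y) := hLtw (E y) x
    have h2 : L (M x) (E y) = L x (M' (E y)) := by
      rw [hM, hM']
      exact pfs_adj_sum N L hLN (n + 1) (fun k => (k.factorial : ℂ)⁻¹) x (E y)
    have h3 : M' (E y) = E' y := by
      rw [← hME]; rfl
    have h4 : L (E x) y = L x (E' y) := by
      rw [hE, hE']
      exact pfs_adj_sum N L hLN (n + 1) (fun k => ((k + 1).factorial : ℂ)⁻¹) x y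
    rw [h1, h2, h3, ← h4]
  -- finish via  a = -(E (g a))
  have hEg : ∀ x : H, -(E (g x)) = x := by
    intro x
    have := LinearMap.ext_iff.mp hg2 x
    simpa using this
  intro a b
  calc L b (g a) = L (-(E (g b))) (g a) := by rw [hEg]
    _ = -(L (E (g b)) (g a)) := by simp
    _ = -((-1 : ℂ) ^ w * L (E (g a)) (g b)) := by rw [key]
    _ = (-1 : ℂ) ^ w * -(L (E (g a)) (g b)) := by ring
    _ = (-1 : ℂ) ^ w * L (-(E (g a))) (g b) := by simp
    _ = (-1 : ℂ) ^ w * L a (g b) := by rw [hEg]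
end

section
/- Fix integers n ≥ 0 and 0 ≤ k ≤ n, and define b_{j,k,n} := (-1)^j · C(k,j) / (n(n-1)⋯(n-j+1)) for 1 ≤ j ≤ k (where C(k,j) is the binomial coefficient, and the empty product for j = 0 gives b_{0,k,n} = 1). Then for complex numbers b_1, …, b_k, the formal power series e^x · (1 + b_1 x + b_2 x^2 + ⋯ + b_k x^k) is congruent modulo x^{n+1} to a polynomial of degree at most n − k (i.e. its coefficients of x^{n-k+1}, …, x^n all vanish) if and only if b_j = b_{j,k,n} for all 1 ≤ j ≤ k. -/
/-!
Multiplying the coefficient of `x^m` in `e^x ∑ b_j x^j` by `m!` gives `P(m)`, where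
`P = ∑ b_j X(X-1)⋯(X-j+1)` has degree at most `k` and `P(0) = b_0 = 1`. So the condition says that
`P` vanishes at the `k` points `n-k+1, …, n`, which together with `P(0) = 1` pins `P` down; as the
falling factorials are linearly independent, this pins down the `b_j`. The stated `b_j` do work:
`C(n,m) P(m) = ∑ (-1)^j C(k,j) C(n-j, n-m)` is a `k`-th finite difference of a polynomial of
degree `n - m < k`, hence zero.
-/

open Finset Polynomial
open scoped Nat

theorem Int.alternating_sum_range_choose_mul_choose_sub_eq_zero {k n r : ℕ} (hr : r < k)
    (hk : k ≤ n) : ∑ j ∈ Finset.range (k + 1), (-1 : ℤ) ^ j * k.choose j * (n - j).choose r = 0 := by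
  have hΔ : (fwdDiff 1)^[k] (fun x : ℕ ↦ (x.choose r : ℤ)) = fun _ ↦ 0 := by
    obtain ⟨d, rfl⟩ := Nat.exists_eq_add_of_lt hr
    have hchoose := fwdDiff_iter_choose 0 r
    rw [add_zero] at hchoose
    rw [show r + d + 1 = d + 1 + r by ring, Function.iterate_add, Function.comp_apply, hchoose,
      Function.iterate_succ_apply]
    simpa using Function.iterate_fixed (fwdDiff_const 1 (0 : ℤ)) d
  have := congrFun hΔ (n - k)
  rw [fwdDiff_iter_eq_sum_shift, ← sum_range_reflect] at this
  refine (sum_congr rfl fun j hj ↦ ?_).trans this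
  have hjk : j ≤ k := Nat.lt_succ_iff.mp (mem_range.mp hj)
  rw [show k + 1 - 1 - j = k - j by omega, show k - (k - j) = j by omega,
    show n - k + (k - j) • 1 = n - j by simp; omega, Nat.choose_symm hjk, zsmul_eq_mul]
  push_cast
  ring

theorem Nat.descFactorial_mul_choose {m n : ℕ} (j : ℕ) (hmn : m ≤ n) :
    m.descFactorial j * n.choose m = n.descFactorial j * (n - j).choose (n - m) := by
  by_cases hjm : j ≤ m
  · rw [descFactorial_eq_factorial_mul_choose, descFactorial_eq_factorial_mul_choose, mul_assoc,
      mul_comm (m.choose j), choose_mul hjm, mul_assoc,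
      choose_symm_of_eq_add (show n - j = m - j + (n - m) by omega)]
  by_cases hjn : j ≤ n
  · rw [descFactorial_eq_zero_iff_lt.mpr (not_le.mp hjm),
      choose_eq_zero_of_lt (show n - j < n - m by omega), zero_mul, mul_zero]
  · rw [descFactorial_eq_zero_iff_lt.mpr (not_le.mp hjm),
      descFactorial_eq_zero_iff_lt.mpr (not_le.mp hjn), zero_mul, zero_mul]

namespace Polynomial

noncomputable def descPochhammerSequence (R : Type*) [CommRing R] [IsDomain R] : Sequence R where
  elems' := descPochhammer R
  degree_eq' i := by
    rw [degree_eq_natDegree (monic_descPochhammer R i).ne_zero, descPochhammer_natDegree]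

theorem linearIndependent_descPochhammer (R : Type*) [CommRing R] [IsDomain R] :
    LinearIndependent R (descPochhammer R) :=
  (descPochhammerSequence R).linearIndependent

theorem eq_of_natDegree_lt_card_of_eval_natCast_eq {R : Type*} [CommRing R] [IsDomain R]
    [CharZero R] {p q : R[X]} {s : Finset ℕ} (hp : p.natDegree < #s) (hq : q.natDegree < #s)
    (heval : ∀ m ∈ s, p.eval (m : R) = q.eval (m : R)) : p = q :=
  eq_of_natDegree_lt_card_of_eval_eq' p q (s.map Nat.castEmbedding) (by simpa using heval)
    (by simpa using max_lt hp hq)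

end Polynomial

section FallingFactorialSum

variable {R : Type*} [CommRing R]

noncomputable def fallingFactorialSum (b : ℕ → R) (k : ℕ) : R[X] :=
  ∑ j ∈ range (k + 1), b j • descPochhammer R j

theorem eval_zero_fallingFactorialSum (b : ℕ → R) (k : ℕ) :
    (fallingFactorialSum b k).eval 0 = b 0 := by
  simp [fallingFactorialSum, eval_finsetSum, sum_range_succ', descPochhammer_ne_zero_eval_zero]

theorem eval_natCast_fallingFactorialSum (b : ℕ → R) (k m : ℕ) :
    (fallingFactorialSum b k).eval (m : R) = ∑ j ∈ range (k + 1), b j * m.descFactorial j := by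
  simp [fallingFactorialSum, eval_finsetSum, descPochhammer_eval_eq_descFactorial]

theorem natDegree_fallingFactorialSum_le [IsDomain R] (b : ℕ → R) (k : ℕ) :
    (fallingFactorialSum b k).natDegree ≤ k :=
  natDegree_sum_le_of_forall_le _ _ fun j hj ↦ (natDegree_smul_le _ _).trans <|
    (descPochhammer_natDegree R j).trans_le (mem_range_succ_iff.mp hj)

theorem eq_of_fallingFactorialSum_eq [IsDomain R] {b c : ℕ → R} {k : ℕ}
    (h : fallingFactorialSum b k = fallingFactorialSum c k) {j : ℕ} (hj : j ≤ k) : b j = c j :=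
  linearIndependent_iff'ₛ.mp (linearIndependent_descPochhammer R) _ b c h j
    (mem_range_succ_iff.mpr hj)

theorem fallingFactorialSum_eq_of_eval_eq_zero [IsDomain R] [CharZero R] {n k : ℕ}
    (hk : k ≤ n) {b c : ℕ → R} (h0 : b 0 = c 0)
    (hb : ∀ m ∈ Ioc (n - k) n, (fallingFactorialSum b k).eval (m : R) = 0)
    (hc : ∀ m ∈ Ioc (n - k) n, (fallingFactorialSum c k).eval (m : R) = 0) :
    fallingFactorialSum b k = fallingFactorialSum c k := by
  have hcard : #(insert 0 (Ioc (n - k) n)) = k + 1 := by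
    rw [card_insert_of_notMem (by simp), Nat.card_Ioc]
    omega
  refine eq_of_natDegree_lt_card_of_eval_natCast_eq (s := insert 0 (Ioc (n - k) n))
    (by grind [natDegree_fallingFactorialSum_le]) (by grind [natDegree_fallingFactorialSum_le])
    fun m hm ↦ ?_
  rcases mem_insert.mp hm with rfl | hm
  · simpa only [Nat.cast_zero, eval_zero_fallingFactorialSum] using h0
  · rw [hb m hm, hc m hm]

end FallingFactorialSum

theorem factorial_mul_coeff_exp_mul {K : Type*} [Field K] [CharZero K] (b : ℕ → K) (k m : ℕ) :
    (m ! : K) * PowerSeries.coeff m (PowerSeries.exp K *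
        ∑ j ∈ range (k + 1), PowerSeries.C (b j) * PowerSeries.X ^ j) =
      (fallingFactorialSum b k).eval (m : K) := by
  rw [eval_natCast_fallingFactorialSum, mul_sum, map_sum, mul_sum]
  refine sum_congr rfl fun j _ ↦ ?_
  rw [mul_left_comm, PowerSeries.coeff_C_mul, ← mul_assoc, PowerSeries.coeff_mul_X_pow']
  split_ifs with hjm
  · rw [PowerSeries.coeff_exp, map_div₀, map_one, map_natCast, mul_comm (m ! : K),
      mul_assoc, ← Nat.factorial_mul_descFactorial hjm, Nat.cast_mul]
    have hfact : ((m - j)! : K) ≠ 0 := Nat.cast_ne_zero.mpr (Nat.factorial_ne_zero _)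
    field_simp
  · simp [Nat.descFactorial_eq_zero_iff_lt.mpr (not_le.mp hjm)]

theorem coeff_exp_mul_eq_zero_iff {K : Type*} [Field K] [CharZero K] (b : ℕ → K) (k m : ℕ) :
    PowerSeries.coeff m (PowerSeries.exp K *
        ∑ j ∈ range (k + 1), PowerSeries.C (b j) * PowerSeries.X ^ j) = 0 ↔
      (fallingFactorialSum b k).eval (m : K) = 0 := by
  rw [← factorial_mul_coeff_exp_mul, mul_eq_zero,
    or_iff_right (Nat.cast_ne_zero.mpr m.factorial_ne_zero)]

theorem eval_fallingFactorialSum_alternating_eq_zero {K : Type*} [Field K] [CharZero K]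
    {n k m : ℕ} (hk : k ≤ n) (hm : m ∈ Ioc (n - k) n) :
    (fallingFactorialSum (fun j ↦ (-1 : K) ^ j * k.choose j / n.descFactorial j) k).eval
      (m : K) = 0 := by
  obtain ⟨hkm, hmn⟩ := mem_Ioc.mp hm
  have hchoose : (n.choose m : K) ≠ 0 := Nat.cast_ne_zero.mpr (Nat.choose_pos hmn).ne'
  refine (mul_eq_zero.mp ?_).resolve_left hchoose
  calc (n.choose m : K) * _
      = ∑ j ∈ range (k + 1), (-1 : K) ^ j * k.choose j * ((n - j).choose (n - m) : K) := by
        rw [eval_natCast_fallingFactorialSum, mul_sum]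
        refine sum_congr rfl fun j hj ↦ ?_
        have hjn : j ≤ n := (mem_range_succ_iff.mp hj).trans hk
        have hdesc : (n.descFactorial j : K) ≠ 0 :=
          Nat.cast_ne_zero.mpr (Nat.descFactorial_pos.mpr hjn).ne'
        have hcast := congrArg (Nat.cast : ℕ → K) (Nat.descFactorial_mul_choose j hmn)
        push_cast at hcast
        field_simp
        linear_combination (k.choose j : K) * hcast
    _ = ((∑ j ∈ range (k + 1), (-1 : ℤ) ^ j * k.choose j * (n - j).choose (n - m) : ℤ) : K) := by
        push_cast; rfl
    _ = 0 := by
        rw [Int.alternating_sum_range_choose_mul_choose_sub_eq_zero (by omega) hk, Int.cast_zero]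

/-- `e^x (1 + b_1 x + ⋯ + b_k x^k)` is congruent mod `x^{n+1}` to a polynomial of degree
at most `n - k` iff `b_j = (-1)^j C(k,j) / (n(n-1)⋯(n-j+1))` for `1 ≤ j ≤ k`. -/
theorem exp_coefficients_characterization (n k : ℕ) (hk : k ≤ n)
    (b : ℕ → ℂ) (hb0 : b 0 = 1) :
    (∀ m : ℕ, n - k < m → m ≤ n →
        PowerSeries.coeff (R := ℂ) m (PowerSeries.exp ℂ *
          ∑ j ∈ Finset.range (k + 1), PowerSeries.C (R := ℂ) (b j) * PowerSeries.X ^ j) = 0) ↔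
      (∀ j : ℕ, 1 ≤ j → j ≤ k →
        b j = (-1 : ℂ) ^ j * (k.choose j : ℂ) / (n.descFactorial j : ℂ)) := by
  set β : ℕ → ℂ := fun j ↦ (-1 : ℂ) ^ j * (k.choose j : ℂ) / (n.descFactorial j : ℂ)
  have hβ0 : b 0 = β 0 := by simp [β, hb0]
  have hβ (m : ℕ) (hm : m ∈ Ioc (n - k) n) : (fallingFactorialSum β k).eval (m : ℂ) = 0 :=
    eval_fallingFactorialSum_alternating_eq_zero hk hm
  simp_rw [coeff_exp_mul_eq_zero_iff]
  constructor
  · intro h j _ hjk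
    refine eq_of_fallingFactorialSum_eq (fallingFactorialSum_eq_of_eval_eq_zero hk hβ0
      (fun m hm ↦ h m (mem_Ioc.mp hm).1 (mem_Ioc.mp hm).2) hβ) hjk
  · intro h m hm hmn
    have hbβ : fallingFactorialSum b k = fallingFactorialSum β k := by
      refine sum_congr rfl fun j hj ↦ ?_
      rcases j with _ | j
      · rw [hβ0]
      · rw [h (j + 1) j.succ_pos (mem_range_succ_iff.mp hj)]
    rw [hbβ]
    exact hβ m (mem_Ioc.mpr ⟨hm, hmn⟩)
end

section
/- Fix an integer n ≥ 0, and for 0 ≤ k ≤ n define the polynomial B_{k,n}(x) := Σ_{j=0}^k (-1)^j C(k,j) / (n(n-1)⋯(n-j+1)) · x^j ∈ ℂ[x] (with the j = 0 term equal to 1); set B_{n+1,n} := 0 and B_{-1,n} := 0. Then for every 0 ≤ k ≤ n one has the congruence x·B_{k,n}(x) ≡ (k − n)·B_{k+1,n}(x) + (n − 2k)·B_{k,n}(x) + k·B_{k-1,n}(x) modulo x^{n+1}. -/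
/-!
Compare coefficients of `x ^ d` for `d ≤ n`. At `d = 0` both sides are `0`; at `d = e + 1`, since
`n(n-1)⋯(n-e) = (n - e) · n(n-1)⋯(n-e+1)`, the congruence becomes a binomial identity that is linear
in `n` and follows from Pascal's rule and the absorption identities
`C(k,e+1)(e+1) = C(k,e)(k-e)` and `k C(k-1,e) = (k-e) C(k,e)`.
The boundary polynomials `B_{n+1,n}` and `B_{-1,n}` only ever appear multiplied by `k - n = 0`
and `k = 0` respectively.
-/

/-- The polynomial `B_{m,n}(x) = Σ_{j=0}^m (-1)^j C(m,j)/(n(n-1)⋯(n-j+1)) x^j` for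
`m ≤ n`, and `0` otherwise (covering the boundary case `B_{n+1,n} = 0`). -/
noncomputable def Bpoly (n m : ℕ) : Polynomial ℂ :=
  if m ≤ n then
    ∑ j ∈ Finset.range (m + 1),
      Polynomial.C ((-1 : ℂ) ^ j * (m.choose j : ℂ) / (n.descFactorial j : ℂ)) *
        Polynomial.X ^ j
  else 0

open Polynomial

section Choose

variable {R : Type*} [CommRing R]

theorem cast_choose_succ_mul (k e : ℕ) :
    (k.choose (e + 1) : R) * (e + 1) = k.choose e * ((k : R) - e) := by
  rcases le_or_gt e k with h | h
  · have h' := congrArg (Nat.cast (R := R)) (Nat.choose_succ_right_eq k e)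
    push_cast [Nat.cast_sub h] at h'
    exact h'
  · simp [Nat.choose_eq_zero_of_lt h, Nat.choose_eq_zero_of_lt (Nat.lt_succ_of_lt h)]

theorem cast_mul_choose_pred (k e : ℕ) :
    (k : R) * (k - 1).choose e = ((k : R) - e) * k.choose e := by
  cases k with
  | zero => cases e <;> simp
  | succ j =>
    have h := congrArg (Nat.cast (R := R)) (Nat.add_one_mul_choose_eq j e)
    have h' := cast_choose_succ_mul (R := R) (j + 1) e
    push_cast at h h' ⊢
    linear_combination h + h'

theorem choose_three_term_identity (z : R) (k e : ℕ) :
    (z - e) * k.choose e + ((k : R) - z) * (k + 1).choose (e + 1) + (z - 2 * k) * k.choose (e + 1)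
      + k * (k - 1).choose (e + 1) = 0 := by
  have pascal : ((k + 1).choose (e + 1) : R) = k.choose e + k.choose (e + 1) := by
    rw [Nat.choose_succ_succ, Nat.cast_add]
  have pred := cast_mul_choose_pred (R := R) k (e + 1)
  push_cast at pred
  linear_combination ((k : R) - z) * pascal + pred - cast_choose_succ_mul (R := R) k e

end Choose

noncomputable def Bcoeff (n m d : ℕ) : ℂ :=
  (-1) ^ d * m.choose d / n.descFactorial d

@[simp]
theorem Bcoeff_zero (n m : ℕ) : Bcoeff n m 0 = 1 := by
  simp [Bcoeff]

theorem Bpoly_coeff {n m : ℕ} (hm : m ≤ n) (d : ℕ) : (Bpoly n m).coeff d = Bcoeff n m d := by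
  rw [Bpoly, if_pos hm, finsetSum_coeff]
  simp only [coeff_C_mul, coeff_X_pow, mul_ite, mul_one, mul_zero]
  rw [Finset.sum_ite_eq, Bcoeff]
  split_ifs with hd
  · rfl
  · rw [Nat.choose_eq_zero_of_lt (by simpa using hd)]
    simp

theorem sub_mul_Bpoly_succ_coeff {n k : ℕ} (hk : k ≤ n) (d : ℕ) :
    ((k : ℂ) - n) * (Bpoly n (k + 1)).coeff d = ((k : ℂ) - n) * Bcoeff n (k + 1) d := by
  rcases hk.eq_or_lt with rfl | hlt
  · simp
  · rw [Bpoly_coeff hlt]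

theorem mul_Bpoly_pred_coeff {n k : ℕ} (hk : k ≤ n) (d : ℕ) :
    (k : ℂ) * (Bpoly n (k - 1)).coeff d = k * Bcoeff n (k - 1) d := by
  rw [Bpoly_coeff (k.sub_le 1 |>.trans hk)]

theorem Bcoeff_recurrence {n e : ℕ} (k : ℕ) (he : e < n) :
    Bcoeff n k e = ((k : ℂ) - n) * Bcoeff n (k + 1) (e + 1) + ((n : ℂ) - 2 * k) * Bcoeff n k (e + 1)
      + k * Bcoeff n (k - 1) (e + 1) := by
  have hD : (n.descFactorial e : ℂ) ≠ 0 := by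
    simpa [Nat.descFactorial_eq_zero_iff_lt] using he.le
  have hne : (n : ℂ) - e ≠ 0 := sub_ne_zero.mpr (by exact_mod_cast he.ne')
  have hD_succ : (n.descFactorial (e + 1) : ℂ) = ((n : ℂ) - e) * n.descFactorial e := by
    rw [Nat.descFactorial_succ, Nat.cast_mul, Nat.cast_sub he.le]
  simp only [Bcoeff, hD_succ]
  field_simp
  linear_combination (-1 : ℂ) ^ e * choose_three_term_identity (n : ℂ) k e

/-- The congruence `x·B_{k,n} ≡ (k−n)·B_{k+1,n} + (n−2k)·B_{k,n} + k·B_{k-1,n}`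
modulo `x^{n+1}`. -/
theorem Bpoly_recurrence (n k : ℕ) (hk : k ≤ n) :
    (Polynomial.X ^ (n + 1) : Polynomial ℂ) ∣
      (Polynomial.X * Bpoly n k -
        (Polynomial.C ((k : ℂ) - (n : ℂ)) * Bpoly n (k + 1) +
         Polynomial.C ((n : ℂ) - 2 * (k : ℂ)) * Bpoly n k +
         Polynomial.C (k : ℂ) * Bpoly n (k - 1))) := by
  rw [X_pow_dvd_iff]
  intro d hd
  simp only [coeff_sub, coeff_add, coeff_C_mul, sub_mul_Bpoly_succ_coeff hk,
    mul_Bpoly_pred_coeff hk, Bpoly_coeff hk]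
  cases d with
  | zero =>
    simp only [mul_coeff_zero, coeff_X_zero, zero_mul, Bcoeff_zero]
    ring
  | succ e =>
    rw [coeff_X_mul, Bpoly_coeff hk, Bcoeff_recurrence k (by omega), sub_self]
end

section
/- Let R be a commutative ring, T and K two R-modules, and C : T → End_R(K) an R-linear map whose image consists of pairwise commuting endomorphisms (C_X C_Y = C_Y C_X for all X, Y ∈ T). Suppose there exists ζ ∈ K such that the map T → K, X ↦ C_X ζ, is bijective. Then there is a unique R-bilinear, commutative and associative multiplication ∘ on T satisfying C_X C_Y = −C_{X∘Y} for all X, Y ∈ T, and a unique element e ∈ T with C_e = −id_K; e is a unit for ∘. Moreover ∘ and e do not depend on the choice of the element ζ with the above property. -/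
/-- A Higgs field `C` with commuting values and a cyclic generator `ζ` induces a unique
commutative associative multiplication `∘` on `T` with `C_X C_Y = −C_{X∘Y}` together with a
unique unit `e` with `C_e = −id`; since this characterization does not mention `ζ`,
the multiplication and unit are independent of the choice of `ζ`. -/
theorem multiplication_from_higgs
    (R : Type*) [CommRing R]
    (T K : Type*) [AddCommGroup T] [Module R T] [AddCommGroup K] [Module R K]
    (C : T →ₗ[R] K →ₗ[R] K)
    (hcomm : ∀ X Y : T, C X ∘ₗ C Y = C Y ∘ₗ C X)
    (ζ : K) (hζ : Function.Bijective fun X : T => C X ζ) :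
    ∃! me : (T →ₗ[R] T →ₗ[R] T) × T,
      (∀ X Y : T, me.1 X Y = me.1 Y X) ∧
      (∀ X Y Z : T, me.1 (me.1 X Y) Z = me.1 X (me.1 Y Z)) ∧
      (∀ X Y : T, C X ∘ₗ C Y = - C (me.1 X Y)) ∧
      (C me.2 = - (LinearMap.id : K →ₗ[R] K)) ∧
      (∀ X : T, me.1 me.2 X = X) := by
  have hcomm' : ∀ X Y : T, ∀ k : K, C X (C Y k) = C Y (C X k) := by
    intro X Y k
    exact DFunLike.congr_fun (hcomm X Y) k
  set φ : T →ₗ[R] K := C.flip ζ with hφdef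
  have hb : Function.Bijective φ := hζ
  let E : T ≃ₗ[R] K := LinearEquiv.ofBijective φ hb
  have hEapp : ∀ X : T, E X = C X ζ := fun X => rfl
  -- injectivity of C
  have hCinj : Function.Injective C := by
    intro u v h
    exact hb.1 (show C u ζ = C v ζ by rw [h])
  -- extension lemma
  have key : ∀ (u : T) (D : K →ₗ[R] K), C u ζ = D ζ →
      (∀ W : T, ∀ k : K, D (C W k) = C W (D k)) → C u = D := by
    intro u D h hD
    ext k
    obtain ⟨W, hW⟩ := hb.2 k
    have : φ W = C W ζ := rfl
    rw [← hW, this]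
    calc C u (C W ζ) = C W (C u ζ) := hcomm' u W ζ
      _ = C W (D ζ) := by rw [h]
      _ = D (C W ζ) := (hD W ζ).symm
  -- definitions
  set mul : T →ₗ[R] T →ₗ[R] T := -((C.compl₂ φ).compr₂ E.symm.toLinearMap) with hmuldef
  set e : T := E.symm (-ζ) with hedef
  have hmulapp : ∀ X Y : T, mul X Y = - E.symm (C X (C Y ζ)) := fun X Y => rfl
  have hCmul : ∀ X Y : T, C (mul X Y) = -(C X ∘ₗ C Y) := by
    intro X Y
    apply key
    · have h1 : C (mul X Y) ζ = E (mul X Y) := rfl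
      rw [h1, hmulapp, map_neg, E.apply_symm_apply]
      rfl
    · intro W k
      simp only [LinearMap.neg_apply, LinearMap.coe_comp, Function.comp_apply, map_neg]
      rw [hcomm' Y W k, hcomm' X W]
  have hCe : C e = -(LinearMap.id : K →ₗ[R] K) := by
    apply key
    · have h1 : C e ζ = E e := rfl
      rw [h1, hedef, E.apply_symm_apply]
      rfl
    · intro W k
      simp
  have hassocC : ∀ X Y Z : T, C (mul (mul X Y) Z) = C (mul X (mul Y Z)) := by
    intro X Y Z
    rw [hCmul, hCmul, hCmul, hCmul]
    ext k
    simp only [LinearMap.neg_apply, LinearMap.coe_comp, Function.comp_apply, map_neg,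
      neg_neg]
  refine ⟨(mul, e), ⟨?_, ?_, ?_, hCe, ?_⟩, ?_⟩
  · intro X Y
    apply hCinj
    rw [hCmul, hCmul, hcomm]
  · intro X Y Z
    exact hCinj (hassocC X Y Z)
  · intro X Y
    rw [hCmul, neg_neg]
  · intro X
    apply hCinj
    rw [hCmul, hCe]
    ext k
    simp
  · rintro ⟨m, u⟩ ⟨_, _, h3, h4, _⟩
    have hu : u = e := hCinj (by rw [h4, hCe])
    have hm : m = mul := by
      ext X Y
      apply hCinj
      rw [hCmul]
      have := h3 X Y
      rw [this, neg_neg]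
    simp only [Prod.mk.injEq]
    exact ⟨hm, hu⟩
end

section
/- Let H be a finite-dimensional complex vector space with a real form, i.e. a real subspace H_ℝ with H = H_ℝ ⊕ iH_ℝ, and let v ↦ v̄ denote the associated antilinear conjugation. Let w be an integer and Q : H → H a ℂ-linear endomorphism that is diagonalizable with all eigenvalues real, none of which lies in (w+1)/2 + ℤ, and which satisfies conj∘Q∘conj = −Q. For p ∈ ℤ define H^{p,w-p} := ⊕_{α : ⌊α+(w+1)/2⌋ = p} ker(Q − α·id) (sum over real eigenvalues α of Q), and F^p := ⊕_{q ≥ p} H^{q,w-q}. Then: (1) the conjugate of H^{p,w-p} equals H^{w-p,p}; (2) for every p, H = F^p ⊕ conjugate(F^{w+1-p}); i.e. F^• is the Hodge filtration of a pure Hodge structure of weight w on H. -/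
open Submodule

lemma disjoint_biSup_biSup_of_iSupIndep {ι R M : Type*} [Ring R] [AddCommGroup M] [Module R M]
    {p : ι → Submodule R M} (h : iSupIndep p) {P T : ι → Prop}
    (hPT : ∀ i, P i → ¬ T i) :
    Disjoint (⨆ i, ⨆ _ : P i, p i) (⨆ i, ⨆ _ : T i, p i) := by
  classical
  rw [Submodule.disjoint_def]
  intro x hx1 hx2
  rw [Submodule.mem_biSup_iff_exists_dfinsupp] at hx1 hx2
  obtain ⟨f, hf⟩ := hx1
  obtain ⟨g, hg⟩ := hx2
  have hfg : DFinsupp.filter P f = DFinsupp.filter T g :=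
    h.dfinsupp_lsum_injective (hf.trans hg.symm)
  have h0 : DFinsupp.filter P f = 0 := by
    ext i
    have h1 : (DFinsupp.filter P f) i = (DFinsupp.filter T g) i := by rw [hfg]
    by_cases hi : P i
    · simp [DFinsupp.filter_apply, hi, hPT i hi] at h1 ⊢
      exact h1
    · simp [DFinsupp.filter_apply, hi]
  rw [← hf, h0, map_zero]

lemma floor_neg_add_half (w : ℤ) (μ : ℝ) (h : ∀ m : ℤ, μ ≠ ((w : ℝ) + 1) / 2 + m) :
    ⌊-μ + ((w : ℝ) + 1) / 2⌋ = w - ⌊μ + ((w : ℝ) + 1) / 2⌋ := by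
  set c : ℝ := ((w : ℝ) + 1) / 2 with hc
  set x : ℝ := μ + c with hx
  have hni : ∀ n : ℤ, x ≠ (n : ℝ) := by
    intro n hn
    refine h (n - (w + 1)) ?_
    push_cast
    rw [hx, hc] at hn
    linarith
  have h1 : (⌊x⌋ : ℝ) < x :=
    lt_of_le_of_ne (Int.floor_le x) (fun e => hni ⌊x⌋ e.symm)
  have h2 : x < ⌊x⌋ + 1 := Int.lt_floor_add_one x
  have hxx : -μ + c = ((w : ℝ) + 1) - x := by rw [hx, hc]; ring
  rw [hxx, Int.floor_eq_iff]
  constructor <;> · push_cast; linarith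

/-- The subspace `H^{p,w-p} = ⊕_{α : ⌊α+(w+1)/2⌋ = p} ker(Q − α)`. -/
noncomputable def HodgePiece {H : Type*} [AddCommGroup H] [Module ℂ H]
    (Q : H →ₗ[ℂ] H) (w : ℤ) (p : ℤ) : Submodule ℂ H :=
  ⨆ μ : ℝ, ⨆ _ : ⌊μ + ((w : ℝ) + 1) / 2⌋ = p,
    LinearMap.ker (Q - (μ : ℂ) • (LinearMap.id : H →ₗ[ℂ] H))

/-- The filtration `F^p = ⊕_{q ≥ p} H^{q,w-q}`. -/
noncomputable def HodgeFilt {H : Type*} [AddCommGroup H] [Module ℂ H]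
    (Q : H →ₗ[ℂ] H) (w : ℤ) (p : ℤ) : Submodule ℂ H :=
  ⨆ q : ℤ, ⨆ _ : p ≤ q, HodgePiece Q w q

/-- The eigenspace decomposition of the supersymmetric index `Q` defines a pure Hodge
structure of weight `w`: conjugation maps `H^{p,w-p}` to `H^{w-p,p}`, and
`H = F^p ⊕ conj(F^{w+1-p})` for every `p`. -/
theorem hodge_structure_from_Q
    (H : Type*) [AddCommGroup H] [Module ℂ H] [FiniteDimensional ℂ H]
    (conj : H → H)
    (conj_add : ∀ a b : H, conj (a + b) = conj a + conj b)
    (conj_smul : ∀ (c : ℂ) (a : H), conj (c • a) = starRingEnd ℂ c • conj a)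
    (conj_inv : ∀ a : H, conj (conj a) = a)
    (w : ℤ) (Q : H →ₗ[ℂ] H)
    (hdiag : (⨆ μ : ℝ, LinearMap.ker (Q - (μ : ℂ) • (LinearMap.id : H →ₗ[ℂ] H))) = ⊤)
    (havoid : ∀ μ : ℝ,
      LinearMap.ker (Q - (μ : ℂ) • (LinearMap.id : H →ₗ[ℂ] H)) ≠ ⊥ →
      ∀ m : ℤ, μ ≠ ((w : ℝ) + 1) / 2 + m)
    (hconjQ : ∀ a : H, conj (Q (conj a)) = - Q a) :
    (∀ p : ℤ, conj '' (HodgePiece Q w p : Set H) = (HodgePiece Q w (w - p) : Set H)) ∧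
    (∀ p : ℤ, ∀ x : H,
      ∃ a ∈ HodgeFilt Q w p, ∃ b ∈ HodgeFilt Q w (w + 1 - p), x = a + conj b) ∧
    (∀ p : ℤ, ∀ a ∈ HodgeFilt Q w p, ∀ b ∈ HodgeFilt Q w (w + 1 - p),
      a + conj b = 0 → a = 0 ∧ b = 0) := by
  classical
  set c : ℝ := ((w : ℝ) + 1) / 2 with hc
  set E : ℝ → Submodule ℂ H :=
    fun μ => LinearMap.ker (Q - (μ : ℂ) • (LinearMap.id : H →ₗ[ℂ] H)) with hE
  let σ : H ≃ₛₗ[starRingEnd ℂ] H :=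
    { toFun := conj, invFun := conj,
      map_add' := conj_add, map_smul' := conj_smul,
      left_inv := conj_inv, right_inv := conj_inv }
  have hσ : ∀ x : H, σ x = conj x := fun _ => rfl
  have hσs : ∀ x : H, σ.symm x = conj x := fun _ => rfl
  have conj_zero : conj 0 = 0 := by
    have h := conj_add 0 0
    rw [add_zero] at h
    exact left_eq_add.mp h
  have conj_neg : ∀ x : H, conj (-x) = - conj x := by
    intro x
    have h := conj_smul (-1) x
    simpa using h
  have memE : ∀ (μ : ℝ) (x : H), x ∈ E μ ↔ Q x = (μ : ℂ) • x := by
    intro μ x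
    simp [hE, LinearMap.mem_ker, sub_eq_zero, LinearMap.sub_apply]
  have key : ∀ x : H, Q (conj x) = - conj (Q x) := by
    intro x
    have h := congrArg conj (hconjQ x)
    rw [conj_inv, conj_neg] at h
    exact h
  -- map of eigenspaces under conjugation
  have mapE : ∀ μ : ℝ, Submodule.map (σ : H →ₛₗ[starRingEnd ℂ] H) (E μ) = E (-μ) := by
    intro μ
    ext x
    rw [Submodule.mem_map_equiv, memE, memE, hσs]
    constructor
    · intro h
      rw [key, neg_eq_iff_eq_neg] at h
      have h2 := congrArg conj h
      rw [conj_inv, conj_neg, conj_smul, conj_inv] at h2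
      rw [h2, ← neg_smul]
      push_cast
      simp [Complex.conj_ofReal]
    · intro h
      rw [key, h, conj_smul]
      push_cast
      simp [Complex.conj_ofReal]
  have piece_eq : ∀ p : ℤ, HodgePiece Q w p = ⨆ μ, ⨆ _ : ⌊μ + c⌋ = p, E μ := fun _ => rfl
  -- floor symmetry for actual eigenvalues
  have hfl : ∀ μ : ℝ, E μ ≠ ⊥ → ⌊-μ + c⌋ = w - ⌊μ + c⌋ := by
    intro μ hμ
    exact floor_neg_add_half w μ (havoid μ hμ)
  have hfl' : ∀ μ : ℝ, E (-μ) ≠ ⊥ → ⌊-μ + c⌋ = w - ⌊μ + c⌋ := by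
    intro μ hμ
    have h := hfl (-μ) hμ
    rw [neg_neg] at h
    omega
  have mapPiece : ∀ p : ℤ,
      Submodule.map (σ : H →ₛₗ[starRingEnd ℂ] H) (HodgePiece Q w p) = HodgePiece Q w (w - p) := by
    intro p
    rw [piece_eq, piece_eq]
    simp_rw [Submodule.map_iSup, mapE]
    apply le_antisymm
    · refine iSup₂_le fun μ hμ => ?_
      by_cases hb : E (-μ) = ⊥
      · rw [hb]; exact bot_le
      · exact le_iSup₂_of_le (-μ) (by rw [hfl' μ hb, hμ]) le_rfl
    · refine iSup₂_le fun ν hν => ?_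
      by_cases hb : E ν = ⊥
      · rw [hb]; exact bot_le
      · refine le_iSup₂_of_le (-ν) ?_ (by rw [neg_neg])
        have := hfl ν hb
        omega
  have filt_eq : ∀ p : ℤ, HodgeFilt Q w p = ⨆ μ, ⨆ _ : p ≤ ⌊μ + c⌋, E μ := by
    intro p
    apply le_antisymm
    · refine iSup₂_le fun q hq => ?_
      rw [piece_eq]
      refine iSup₂_le fun μ hμ => ?_
      exact le_iSup₂_of_le μ (by omega) le_rfl
    · refine iSup₂_le fun μ hμ => ?_
      refine le_iSup₂_of_le ⌊μ + c⌋ hμ ?_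
      rw [piece_eq]
      exact le_iSup₂_of_le μ rfl le_rfl
  have mapFilt : ∀ p : ℤ,
      Submodule.map (σ : H →ₛₗ[starRingEnd ℂ] H) (HodgeFilt Q w (w + 1 - p)) =
        ⨆ μ, ⨆ _ : ⌊μ + c⌋ < p, E μ := by
    intro p
    rw [filt_eq]
    simp_rw [Submodule.map_iSup, mapE]
    apply le_antisymm
    · refine iSup₂_le fun μ hμ => ?_
      by_cases hb : E (-μ) = ⊥
      · rw [hb]; exact bot_le
      · exact le_iSup₂_of_le (-μ) (by have := hfl' μ hb; omega) le_rfl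
    · refine iSup₂_le fun ν hν => ?_
      by_cases hb : E ν = ⊥
      · rw [hb]; exact bot_le
      · refine le_iSup₂_of_le (-ν) ?_ (by rw [neg_neg])
        have := hfl ν hb
        omega
  -- spanning
  have span : ∀ p : ℤ,
      (⨆ μ, ⨆ _ : p ≤ ⌊μ + c⌋, E μ) ⊔ (⨆ μ, ⨆ _ : ⌊μ + c⌋ < p, E μ) = ⊤ := by
    intro p
    rw [eq_top_iff, ← hdiag]
    refine iSup_le fun μ => ?_
    by_cases h : p ≤ ⌊μ + c⌋
    · exact le_sup_of_le_left (le_iSup₂_of_le μ h le_rfl)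
    · exact le_sup_of_le_right (le_iSup₂_of_le μ (by omega) le_rfl)
  -- independence
  have hEeig : E = fun μ : ℝ => Module.End.eigenspace Q (μ : ℂ) := by
    funext μ
    ext x
    rw [memE, Module.End.mem_eigenspace_iff]
  have hInd : iSupIndep E := by
    rw [hEeig]
    exact (Module.End.eigenspaces_iSupIndep Q).comp Complex.ofReal_injective
  have hdisj : ∀ p : ℤ,
      Disjoint (⨆ μ, ⨆ _ : p ≤ ⌊μ + c⌋, E μ) (⨆ μ, ⨆ _ : ⌊μ + c⌋ < p, E μ) := by
    intro p
    exact disjoint_biSup_biSup_of_iSupIndep hInd (fun μ h1 h2 => by omega)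
  refine ⟨?_, ?_, ?_⟩
  · intro p
    have h := mapPiece p
    have h2 : (⇑(σ : H →ₛₗ[starRingEnd ℂ] H) : H → H) = conj := rfl
    rw [← h, Submodule.map_coe, h2]
  · intro p x
    have hx : x ∈ (⨆ μ, ⨆ _ : p ≤ ⌊μ + c⌋, E μ) ⊔ (⨆ μ, ⨆ _ : ⌊μ + c⌋ < p, E μ) := by
      rw [span p]; trivial
    rw [← mapFilt p] at hx
    obtain ⟨a, ha, y, hy, hxy⟩ := Submodule.mem_sup.mp hx
    obtain ⟨b, hb, hby⟩ := Submodule.mem_map.mp hy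
    refine ⟨a, ?_, b, hb, ?_⟩
    · rw [filt_eq]; exact ha
    · rw [← hxy, ← hby]
      rfl
  · intro p a ha b hb hab
    have ha' : a ∈ (⨆ μ, ⨆ _ : p ≤ ⌊μ + c⌋, E μ) := by rw [← filt_eq]; exact ha
    have hcb : conj b ∈ (⨆ μ, ⨆ _ : ⌊μ + c⌋ < p, E μ) := by
      rw [← mapFilt p]
      exact Submodule.mem_map_of_mem hb
    have hane : a = - conj b := eq_neg_of_add_eq_zero_left hab
    have ha2 : a ∈ (⨆ μ, ⨆ _ : ⌊μ + c⌋ < p, E μ) := by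
      rw [hane]; exact neg_mem hcb
    have ha0 : a = 0 := (Submodule.disjoint_def.mp (hdisj p)) a ha' ha2
    have hcb0 : conj b = 0 := by
      rw [ha0, zero_add] at hab
      exact hab
    have hb0 : b = 0 := by rw [← conj_inv b, hcb0, conj_zero]
    exact ⟨ha0, hb0⟩
end
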